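/- At a vertex where the disagreement probability is maximal, its time derivative is strictly dissipative: if s ≥ 0 and x_k ∈ V(G) satisfies P(Z_s(x_k)=1) ≥ P(Z_s(v)=1) for every vertex v ∈ V(G), then the derivative at t = s of the function t ↦ P(Z_t(x_k)=1) is at most −(2δ/(2δ+1))·P(Z_s(x_k)=1). -/

import Mathlib

open Finset

/-- Flip rate of the disagreement chain of the noisy voter model at vertex `v` in
configuration `η`: `(2δ/(2δ+1))·1{η(v)=1} + (1/(2δ+1))·(1/d(v))·#{u ~ v : η(u) ≠ η(v)}`. -/
noncomputable def dzRate {V : Type*} [Fintype V] (G : SimpleGraph V) [DecidableRel G.Adj]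
    (δ : ℝ) (v : V) (η : V → Bool) : ℝ :=
  (2 * δ / (2 * δ + 1)) * (if η v = true then 1 else 0) +
    (1 / (2 * δ + 1)) * (1 / (G.degree v : ℝ)) *
      ((Finset.univ.filter fun u => G.Adj v u ∧ η u ≠ η v).card : ℝ)

/-- The rate matrix of the disagreement chain: single-spin flips occur at rate `dzRate`,
transitions changing two or more spins have rate `0`, and diagonal entries make rows sum to `0`. -/
noncomputable def dzQ {V : Type*} [Fintype V] [DecidableEq V] (G : SimpleGraph V)
    [DecidableRel G.Adj] (δ : ℝ) : Matrix (V → Bool) (V → Bool) ℝ := fun η η' =>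
  if η = η' then -∑ v, dzRate G δ v η
  else if (Finset.univ.filter fun v => η v ≠ η' v).card = 1 then
    ∑ v ∈ Finset.univ.filter (fun v => η v ≠ η' v), dzRate G δ v η
  else 0

/-- `P(Z_t(v) = 1)`: the probability that the disagreement chain started from the all-ones
configuration has a disagreement (spin `1`) at vertex `v` at time `t`. -/
noncomputable def probDisagree {V : Type*} [Fintype V] [DecidableEq V] (G : SimpleGraph V)
    [DecidableRel G.Adj] (δ : ℝ) (t : ℝ) (v : V) : ℝ :=
  ∑ η ∈ Finset.univ.filter (fun η : V → Bool => η v = true),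
    NormedSpace.exp (t • dzQ G δ) (fun _ => true) η

/-!
The generator of the disagreement chain maps the indicator `1{η(x)=1}` to
`-(2δ/(2δ+1))·1{η(x)=1} + (1/(2δ+1))·(1/d(x))·Σ_{u ~ x} (1{η(u)=1} - 1{η(x)=1})`: only the flip
at `x` changes the indicator, and its sign turns the number of disagreeing neighbours into that
sum of differences. By the backward equation, `P(Z_t(x)=1)` therefore has derivative
`-(2δ/(2δ+1))·P(Z_t(x)=1) + (1/(2δ+1))·(1/d(x))·Σ_{u ~ x} (P(Z_t(u)=1) - P(Z_t(x)=1))`,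
and at a maximiser every difference in the sum is nonpositive.
-/

open Matrix

theorem hasDerivAt_exp_smul_mulVec_apply {ι : Type*} [Fintype ι] [DecidableEq ι]
    (Q : Matrix ι ι ℝ) (f : ι → ℝ) (i : ι) (s : ℝ) :
    HasDerivAt (fun t : ℝ => (NormedSpace.exp (t • Q) *ᵥ f) i)
      ((NormedSpace.exp (s • Q) *ᵥ (Q *ᵥ f)) i) s := by
  -- any Banach-algebra norm inducing the product topology will do
  let := Matrix.linftyOpNormedRing (n := ι) (α := ℝ)
  let := Matrix.linftyOpNormedAlgebra (n := ι) (R := ℝ) (α := ℝ)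
  let evalMulVec : Matrix ι ι ℝ →L[ℝ] ℝ :=
    LinearMap.toContinuousLinearMap
      { toFun := fun M => (M *ᵥ f) i
        map_add' := fun M N => by simp [Matrix.add_mulVec]
        map_smul' := fun c M => by simp [Matrix.smul_mulVec] }
  rw [mulVec_mulVec]
  exact evalMulVec.hasFDerivAt.comp_hasDerivAt s (hasDerivAt_exp_smul_const Q s)

theorem update_not_eq_iff_filter_ne_eq_singleton {V : Type*} [Fintype V] [DecidableEq V]
    (η η' : V → Bool) (v : V) :
    Function.update η v (!η v) = η' ↔ (univ.filter fun u => η u ≠ η' u) = {v} := by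
  simp only [funext_iff, Finset.ext_iff, mem_filter, mem_univ, mem_singleton]
  refine forall_congr' fun u => ?_
  by_cases h : u = v
  · subst h; cases η u <;> cases η' u <;> simp
  · cases hu : η u <;> cases hu' : η' u <;> simp [h, hu]

def spinIndicator {V : Type*} (v : V) (η : V → Bool) : ℝ := if η v = true then 1 else 0

theorem spinIndicator_update_not_sub {V : Type*} [DecidableEq V] (x v : V) (η : V → Bool) :
    spinIndicator x (Function.update η v (!η v)) - spinIndicator x η =
      if v = x then (if η x = true then -1 else 1) else 0 := by
  unfold spinIndicator
  by_cases h : v = x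
  · subst h; cases η v <;> simp
  · simp [h, Function.update_of_ne (Ne.symm h)]

theorem card_disagreeing_neighbors_mul_sign {V : Type*} [Fintype V] (G : SimpleGraph V)
    [DecidableRel G.Adj] (x : V) (η : V → Bool) :
    (if η x = true then -1 else 1) * (#{u | G.Adj x u ∧ η u ≠ η x} : ℝ) =
      ∑ u ∈ G.neighborFinset x, (spinIndicator u η - spinIndicator x η) := by
  rw [← filter_filter, ← SimpleGraph.neighborFinset_eq_filter, card_filter, Nat.cast_sum, mul_sum]
  refine sum_congr rfl fun u _ => ?_
  unfold spinIndicator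
  cases η x <;> cases η u <;> simp

section DisagreementChain

variable {V : Type*} [Fintype V] [DecidableEq V] (G : SimpleGraph V) [DecidableRel G.Adj] (δ : ℝ)

theorem dzQ_apply_eq_sum (η η' : V → Bool) :
    dzQ G δ η η' = ∑ v, dzRate G δ v η *
      ((if Function.update η v (!η v) = η' then 1 else 0) - if η = η' then 1 else 0) := by
  unfold dzQ
  split_ifs with hη hcard
  · subst hη
    simp [Function.update_eq_self_iff]
  · obtain ⟨w, hw⟩ := card_eq_one.mp hcard
    simp [update_not_eq_iff_filter_ne_eq_singleton, hw]
  · refine (sum_eq_zero fun v _ => ?_).symm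
    rw [if_neg fun h => hcard (by
      rw [(update_not_eq_iff_filter_ne_eq_singleton ..).1 h, card_singleton])]
    ring

theorem dzQ_mulVec_apply (f : (V → Bool) → ℝ) (η : V → Bool) :
    (dzQ G δ *ᵥ f) η = ∑ v, dzRate G δ v η * (f (Function.update η v (!η v)) - f η) := by
  simp only [mulVec, dotProduct, dzQ_apply_eq_sum, sum_mul]
  rw [sum_comm]
  refine sum_congr rfl fun v _ => ?_
  simp [mul_assoc, ← mul_sum, sub_mul]

theorem dzQ_mulVec_spinIndicator_apply (x : V) (η : V → Bool) :
    (dzQ G δ *ᵥ spinIndicator x) η = dzRate G δ x η * (if η x = true then -1 else 1) := by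
  simp [dzQ_mulVec_apply, spinIndicator_update_not_sub]

theorem dzQ_mulVec_spinIndicator (x : V) :
    dzQ G δ *ᵥ spinIndicator x = -(2 * δ / (2 * δ + 1)) • spinIndicator x +
      (1 / (2 * δ + 1) * (1 / (G.degree x : ℝ))) •
        ∑ u ∈ G.neighborFinset x, (spinIndicator u - spinIndicator x) := by
  ext η
  have hsign : (if η x = true then (1 : ℝ) else 0) * (if η x = true then -1 else 1) =
      -spinIndicator x η := by
    unfold spinIndicator; split_ifs <;> norm_num
  simp only [dzQ_mulVec_spinIndicator_apply, dzRate, Pi.add_apply, Pi.smul_apply, Finset.sum_apply,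
    Pi.sub_apply, smul_eq_mul]
  linear_combination 2 * δ / (2 * δ + 1) * hsign +
    1 / (2 * δ + 1) * (1 / (G.degree x : ℝ)) * card_disagreeing_neighbors_mul_sign G x η

theorem probDisagree_eq_mulVec (t : ℝ) (v : V) :
    probDisagree G δ t v = (NormedSpace.exp (t • dzQ G δ) *ᵥ spinIndicator v) fun _ => true := by
  simp [probDisagree, mulVec, dotProduct, spinIndicator, sum_filter]

theorem hasDerivAt_probDisagree (s : ℝ) (x : V) :
    HasDerivAt (fun t => probDisagree G δ t x)
      (-(2 * δ / (2 * δ + 1)) * probDisagree G δ s x + 1 / (2 * δ + 1) * (1 / (G.degree x : ℝ)) *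
        ∑ u ∈ G.neighborFinset x, (probDisagree G δ s u - probDisagree G δ s x)) s := by
  simp only [probDisagree_eq_mulVec]
  convert hasDerivAt_exp_smul_mulVec_apply (dzQ G δ) (spinIndicator x) (fun _ => true) s using 1
  simp only [dzQ_mulVec_spinIndicator, mulVec_add, mulVec_smul, mulVec_sum, mulVec_sub,
    Pi.add_apply, Pi.smul_apply, smul_eq_mul, Finset.sum_apply, Pi.sub_apply]

end DisagreementChain

theorem disagreement_derivative_at_maximizer_general
    {V : Type*} [Fintype V] [DecidableEq V] (δ : ℝ) (hδ : 0 < δ)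
    (G : SimpleGraph V) [DecidableRel G.Adj]
    (s : ℝ) (x_k : V)
    (hmax : ∀ v : V, probDisagree G δ s v ≤ probDisagree G δ s x_k) :
    deriv (fun t => probDisagree G δ t x_k) s ≤
      -(2 * δ / (2 * δ + 1)) * probDisagree G δ s x_k := by
  rw [(hasDerivAt_probDisagree G δ s x_k).deriv]
  have hcoeff : 0 ≤ 1 / (2 * δ + 1) * (1 / (G.degree x_k : ℝ)) := by positivity
  have hsum : ∑ u ∈ G.neighborFinset x_k, (probDisagree G δ s u - probDisagree G δ s x_k) ≤ 0 :=
    sum_nonpos fun u _ => sub_nonpos.2 (hmax u)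
  linarith [mul_nonpos_of_nonneg_of_nonpos hcoeff hsum]

/-- At a vertex where the disagreement probability is maximal, the time derivative of the
disagreement probability is strictly dissipative: if `P(Z_s(x_k)=1) ≥ P(Z_s(v)=1)` for all
vertices `v`, then `(d/dt P(Z_t(x_k)=1))|_{t=s} ≤ −(2δ/(2δ+1))·P(Z_s(x_k)=1)`. -/
theorem disagreement_derivative_at_maximizer
    {V : Type*} [Fintype V] [DecidableEq V] (δ : ℝ) (hδ : 0 < δ)
    (G : SimpleGraph V) [DecidableRel G.Adj] (hdeg : ∀ v, 1 ≤ G.degree v)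
    (s : ℝ) (hs : 0 ≤ s) (x_k : V)
    (hmax : ∀ v : V, probDisagree G δ s v ≤ probDisagree G δ s x_k) :
    deriv (fun t => probDisagree G δ t x_k) s ≤
      -(2 * δ / (2 * δ + 1)) * probDisagree G δ s x_k :=
  disagreement_derivative_at_maximizer_general δ hδ G s x_k hmax
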